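/- arXiv:1608.03301 — 6 statements merged into one kernel-verified Lean document; each statement's English description precedes it below -/
import Mathlib

section
/- Let X and Y be n×n Hermitian positive semidefinite matrices and α, β > 0 with βY ≤ X ≤ αY in the Löwner order. Then for every Schatten p-norm (1 ≤ p ≤ ∞), ‖X - Y‖_p ≤ max(|α - 1|, |β - 1|)·‖Y‖_p. -/
/-!
Put `M = X - Y` and `c = max |α - 1| |β - 1|`. The hypotheses give `-c Y ≤ M ≤ c Y`, so for a unit
eigenvector `v` of `M` with eigenvalue `λ` we get `|λ| ≤ c ⟪v, Y v⟫`. Expanding `v` in an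
eigenbasis of `Y` writes `⟪v, Y v⟫` as a convex combination of the eigenvalues `μⱼ` of `Y` whose
weights `|⟪uⱼ, v⟫|²` form a doubly stochastic matrix as `v` runs over an orthonormal basis. Hence
`∑ᵢ ⟪vᵢ, Y vᵢ⟫^q ≤ ∑ⱼ μⱼ^q` by convexity of `t ↦ t^q` (for `q ≥ 1`), and `⟪vᵢ, Y vᵢ⟫ ≤ maxⱼ μⱼ`.
-/

open Matrix ENNReal
open scoped ComplexOrder

/-- The Schatten p-norm of a Hermitian matrix, via the absolute values of its eigenvalues,
including the p = ∞ (spectral norm) case. -/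
noncomputable def schattenNorm {n : ℕ} {A : Matrix (Fin n) (Fin n) ℂ} (hA : A.IsHermitian)
    (p : ℝ≥0∞) : ℝ :=
  if p = ⊤ then ⨆ i, |hA.eigenvalues i|
  else (∑ i, |hA.eigenvalues i| ^ p.toReal) ^ (1 / p.toReal)

open scoped InnerProductSpace

namespace Matrix

variable {𝕜 : Type*} [RCLike 𝕜] {n : Type*} [Fintype n]

lemma abs_re_star_dotProduct_mulVec_le {M Y : Matrix n n 𝕜} {c : ℝ}
    (h₁ : (c • Y - M).PosSemidef) (h₂ : (c • Y + M).PosSemidef) (v : n → 𝕜) :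
    |RCLike.re (star v ⬝ᵥ (M *ᵥ v))| ≤ c * RCLike.re (star v ⬝ᵥ (Y *ᵥ v)) := by
  have h₁' := h₁.re_dotProduct_nonneg v
  have h₂' := h₂.re_dotProduct_nonneg v
  simp only [sub_mulVec, add_mulVec, smul_mulVec, dotProduct_sub, dotProduct_add,
    dotProduct_smul, map_sub, map_add, RCLike.smul_re] at h₁' h₂'
  rw [abs_le]
  constructor <;> linarith

variable [DecidableEq n]

lemma IsHermitian.re_star_dotProduct_mulVec {A : Matrix n n 𝕜} (hA : A.IsHermitian)
    (w : EuclideanSpace 𝕜 n) :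
    RCLike.re (star ⇑w ⬝ᵥ (A *ᵥ ⇑w)) =
      ∑ j, hA.eigenvalues j * ‖⟪hA.eigenvectorBasis j, w⟫_𝕜‖ ^ 2 := by
  have hw : A *ᵥ ⇑w =
      ∑ j, (⟪hA.eigenvectorBasis j, w⟫_𝕜 * hA.eigenvalues j) • ⇑(hA.eigenvectorBasis j) := by
    conv_lhs => rw [← hA.eigenvectorBasis.sum_repr' w]
    simp only [WithLp.ofLp_sum, WithLp.ofLp_smul, mulVec_sum, mulVec_smul,
      hA.mulVec_eigenvectorBasis, smul_smul, RCLike.real_smul_eq_coe_smul (K := 𝕜)]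
  rw [hw, dotProduct_sum, map_sum]
  refine Finset.sum_congr rfl fun j _ => ?_
  rw [dotProduct_smul, dotProduct_comm, ← EuclideanSpace.inner_eq_star_dotProduct,
    ← inner_conj_symm, smul_eq_mul, mul_right_comm, RCLike.conj_mul, RCLike.norm_conj,
    ← RCLike.ofReal_pow, ← RCLike.ofReal_mul, RCLike.ofReal_re, mul_comm]

lemma IsHermitian.sum_convexOn_re_star_dotProduct_mulVec_le {A : Matrix n n 𝕜}
    (hA : A.IsHermitian) {s : Set ℝ} {f : ℝ → ℝ} (hf : ConvexOn ℝ s f)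
    (hs : ∀ j, hA.eigenvalues j ∈ s) (b : OrthonormalBasis n 𝕜 (EuclideanSpace 𝕜 n)) :
    ∑ i, f (RCLike.re (star ⇑(b i) ⬝ᵥ (A *ᵥ ⇑(b i)))) ≤ ∑ j, f (hA.eigenvalues j) := by
  set u := hA.eigenvectorBasis
  calc ∑ i, f (RCLike.re (star ⇑(b i) ⬝ᵥ (A *ᵥ ⇑(b i))))
      = ∑ i, f (∑ j, ‖⟪u j, b i⟫_𝕜‖ ^ 2 • hA.eigenvalues j) := by
        simp only [hA.re_star_dotProduct_mulVec, smul_eq_mul, mul_comm, u]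
    _ ≤ ∑ i, ∑ j, ‖⟪u j, b i⟫_𝕜‖ ^ 2 • f (hA.eigenvalues j) := by
        refine Finset.sum_le_sum fun i _ => hf.map_sum_le (fun j _ => sq_nonneg _) ?_
          fun j _ => hs j
        rw [u.sum_sq_norm_inner_right, b.orthonormal.1 i, one_pow]
    _ = ∑ j, f (hA.eigenvalues j) := by
        rw [Finset.sum_comm]
        refine Finset.sum_congr rfl fun j _ => ?_
        rw [← Finset.sum_smul, b.sum_sq_norm_inner_left, u.orthonormal.1 j, one_pow, one_smul]

lemma IsHermitian.re_star_dotProduct_mulVec_le_iSup {A : Matrix n n 𝕜} (hA : A.IsHermitian)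
    {w : EuclideanSpace 𝕜 n} (hw : ‖w‖ = 1) :
    RCLike.re (star ⇑w ⬝ᵥ (A *ᵥ ⇑w)) ≤ ⨆ j, hA.eigenvalues j := by
  rw [hA.re_star_dotProduct_mulVec]
  calc ∑ j, hA.eigenvalues j * ‖⟪hA.eigenvectorBasis j, w⟫_𝕜‖ ^ 2
      ≤ ∑ j, (⨆ k, hA.eigenvalues k) * ‖⟪hA.eigenvectorBasis j, w⟫_𝕜‖ ^ 2 :=
        Finset.sum_le_sum fun j _ => mul_le_mul_of_nonneg_right
          (le_ciSup (Set.finite_range _).bddAbove j) (sq_nonneg _)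
    _ = ⨆ k, hA.eigenvalues k := by
        rw [← Finset.mul_sum, hA.eigenvectorBasis.sum_sq_norm_inner_right, hw, one_pow, mul_one]

variable {M Y : Matrix n n 𝕜} {c : ℝ}

lemma sum_abs_eigenvalues_rpow_le (hM : M.IsHermitian) (hY : Y.PosSemidef) (hc : 0 ≤ c)
    (h₁ : (c • Y - M).PosSemidef) (h₂ : (c • Y + M).PosSemidef) {q : ℝ} (hq : 1 ≤ q) :
    ∑ i, |hM.eigenvalues i| ^ q ≤ c ^ q * ∑ j, |hY.isHermitian.eigenvalues j| ^ q := by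
  set v := hM.eigenvectorBasis
  calc ∑ i, |hM.eigenvalues i| ^ q
      ≤ ∑ i, (c * RCLike.re (star ⇑(v i) ⬝ᵥ (Y *ᵥ ⇑(v i)))) ^ q := by
        refine Finset.sum_le_sum fun i _ => Real.rpow_le_rpow (abs_nonneg _) ?_ (by linarith)
        rw [hM.eigenvalues_eq]
        exact abs_re_star_dotProduct_mulVec_le h₁ h₂ _
    _ = c ^ q * ∑ i, RCLike.re (star ⇑(v i) ⬝ᵥ (Y *ᵥ ⇑(v i))) ^ q := by
        rw [Finset.mul_sum]
        exact Finset.sum_congr rfl fun i _ => Real.mul_rpow hc (hY.re_dotProduct_nonneg _)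
    _ ≤ c ^ q * ∑ j, hY.isHermitian.eigenvalues j ^ q := by
        gcongr c ^ q * ?_
        exact hY.isHermitian.sum_convexOn_re_star_dotProduct_mulVec_le (convexOn_rpow hq)
          (fun j => hY.eigenvalues_nonneg j) v
    _ = c ^ q * ∑ j, |hY.isHermitian.eigenvalues j| ^ q := by
        simp only [abs_of_nonneg (hY.eigenvalues_nonneg _)]

lemma iSup_abs_eigenvalues_le (hM : M.IsHermitian) (hY : Y.PosSemidef) (hc : 0 ≤ c)
    (h₁ : (c • Y - M).PosSemidef) (h₂ : (c • Y + M).PosSemidef) :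
    ⨆ i, |hM.eigenvalues i| ≤ c * ⨆ j, |hY.isHermitian.eigenvalues j| := by
  simp only [abs_of_nonneg (hY.eigenvalues_nonneg _)]
  refine Real.iSup_le (fun i => ?_) (mul_nonneg hc (Real.iSup_nonneg hY.eigenvalues_nonneg))
  calc |hM.eigenvalues i|
      ≤ c * RCLike.re (star ⇑(hM.eigenvectorBasis i) ⬝ᵥ (Y *ᵥ ⇑(hM.eigenvectorBasis i))) := by
        rw [hM.eigenvalues_eq]
        exact abs_re_star_dotProduct_mulVec_le h₁ h₂ _
    _ ≤ c * ⨆ j, hY.isHermitian.eigenvalues j := by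
        gcongr
        exact hY.isHermitian.re_star_dotProduct_mulVec_le_iSup (hM.eigenvectorBasis.orthonormal.1 i)

end Matrix

theorem schattenNorm_le_of_posSemidef_sub_of_posSemidef_add {n : ℕ}
    {M Y : Matrix (Fin n) (Fin n) ℂ} (hM : M.IsHermitian) (hY : Y.PosSemidef) {c : ℝ}
    (hc : 0 ≤ c) (h₁ : (c • Y - M).PosSemidef) (h₂ : (c • Y + M).PosSemidef) {p : ℝ≥0∞}
    (hp : 1 ≤ p) :
    schattenNorm hM p ≤ c * schattenNorm hY.isHermitian p := by
  unfold schattenNorm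
  split_ifs with hp_top
  · exact iSup_abs_eigenvalues_le hM hY hc h₁ h₂
  · have hq : 1 ≤ p.toReal := by simpa using ENNReal.toReal_mono hp_top hp
    calc (∑ i, |hM.eigenvalues i| ^ p.toReal) ^ (1 / p.toReal)
        ≤ (c ^ p.toReal * ∑ j, |hY.isHermitian.eigenvalues j| ^ p.toReal) ^ (1 / p.toReal) := by
          gcongr
          exact sum_abs_eigenvalues_rpow_le hM hY hc h₁ h₂ hq
      _ = c * (∑ j, |hY.isHermitian.eigenvalues j| ^ p.toReal) ^ (1 / p.toReal) := by
          rw [Real.mul_rpow (by positivity) (by positivity), ← Real.rpow_mul hc,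
            mul_one_div_cancel (by positivity), Real.rpow_one]

theorem stmt3_general {n : ℕ} {X Y : Matrix (Fin n) (Fin n) ℂ}
    (hX : X.PosSemidef) (hY : Y.PosSemidef) (α β : ℝ)
    (h₁ : (α • Y - X).PosSemidef) (h₂ : (X - β • Y).PosSemidef)
    (p : ℝ≥0∞) (hp : 1 ≤ p) :
    schattenNorm (hX.isHermitian.sub hY.isHermitian) p ≤
      max |α - 1| |β - 1| * schattenNorm hY.isHermitian p := by
  set c := max |α - 1| |β - 1|
  have hαc : α - 1 ≤ c := (le_abs_self _).trans (le_max_left _ _)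
  have hβc : 1 - β ≤ c := ((le_abs_self _).trans_eq (abs_sub_comm _ _)).trans (le_max_right _ _)
  refine schattenNorm_le_of_posSemidef_sub_of_posSemidef_add _ hY (by positivity) ?_ ?_ hp
  · rw [show c • Y - (X - Y) = (c - (α - 1)) • Y + (α • Y - X) by module]
    exact (hY.smul (by linarith)).add h₁
  · rw [show c • Y + (X - Y) = (c - (1 - β)) • Y + (X - β • Y) by module]
    exact (hY.smul (by linarith)).add h₂

theorem stmt3 {n : ℕ} {X Y : Matrix (Fin n) (Fin n) ℂ}
    (hX : X.PosSemidef) (hY : Y.PosSemidef) (α β : ℝ) (hα : 0 < α) (hβ : 0 < β)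
    (h₁ : (α • Y - X).PosSemidef) (h₂ : (X - β • Y).PosSemidef)
    (p : ℝ≥0∞) (hp : 1 ≤ p) :
    schattenNorm (hX.isHermitian.sub hY.isHermitian) p ≤
      max |α - 1| |β - 1| * schattenNorm hY.isHermitian p :=
  stmt3_general hX hY α β h₁ h₂ p hp
end

section
/- Let X and Y be n×n Hermitian positive semidefinite matrices and α, β > 0 with βY ≤ X ≤ αY in the Löwner order. Then for every Schatten p-norm, ‖X - Y‖_p ≤ min{ max(|α-1|, |β-1|)·‖Y‖_p , max(|1/α - 1|, |1/β - 1|)·‖X‖_p }. -/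
open Matrix ENNReal
open scoped ComplexOrder

/-!
Put `A = X - Y`. The Löwner bounds give `-c • Y ≤ A ≤ c • Y` with `c = max |α - 1| |β - 1|`,
and, after dividing them by `α` and `β`, `-c' • X ≤ A ≤ c' • X` with
`c' = max |1/α - 1| |1/β - 1|`. Testing `-c • Y ≤ A ≤ c • Y` on the unit eigenvectors `vᵢ` of `A`
gives `|λᵢ(A)| ≤ c ⟪vᵢ, Y vᵢ⟫`, and `⟪vᵢ, Y vᵢ⟫ = ∑ⱼ |⟪vᵢ, wⱼ⟫|² μⱼ(Y)` for an orthonormal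
eigenbasis `wⱼ` of `Y`. The weights `|⟪vᵢ, wⱼ⟫|²` form a doubly stochastic matrix, which by
Birkhoff's theorem is a convex combination of permutation matrices and therefore a contraction
for every `ℓᵖ` norm with `1 ≤ p`. Hence `‖λ(A)‖ₚ ≤ c ‖μ(Y)‖ₚ`.
-/

namespace PiLp

variable {p : ℝ≥0∞} {ι : Type*} [Fintype ι]

theorem norm_le_norm_of_forall_norm_le {β : ι → Type*} [∀ i, SeminormedAddCommGroup (β i)]
    {x y : PiLp p β} (h : ∀ i, ‖x i‖ ≤ ‖y i‖) : ‖x‖ ≤ ‖y‖ := by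
  rcases p.trichotomy with rfl | rfl | hp
  · simp only [norm_eq_card]
    exact_mod_cast Finset.card_le_card fun i hi => by
      simp only [Set.Finite.mem_toFinset] at hi ⊢
      exact fun hy => hi (le_antisymm (hy ▸ h i) (norm_nonneg _))
  · simp only [norm_eq_ciSup]
    exact ciSup_mono (Set.finite_range _).bddAbove h
  · simp only [norm_eq_sum hp]
    gcongr with i
    exact h i

theorem norm_toLp_comp_perm [Fact (1 ≤ p)] (x : ι → ℝ) (σ : Equiv.Perm ι) :
    ‖WithLp.toLp p (x ∘ σ)‖ = ‖WithLp.toLp p x‖ :=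
  (LinearIsometryEquiv.piLpCongrLeft p ℝ ℝ σ.symm).norm_map (WithLp.toLp p x)

theorem norm_toLp_mulVec_le [Fact (1 ≤ p)] [DecidableEq ι] {M : Matrix ι ι ℝ}
    (hM : M ∈ doublyStochastic ℝ ι) (x : ι → ℝ) :
    ‖WithLp.toLp p (M *ᵥ x)‖ ≤ ‖WithLp.toLp p x‖ := by
  obtain ⟨w, hw0, hw1, rfl⟩ := exists_eq_sum_perm_of_mem_doublyStochastic hM
  calc ‖WithLp.toLp p ((∑ σ, w σ • σ.permMatrix ℝ) *ᵥ x)‖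
      = ‖∑ σ, w σ • WithLp.toLp p (x ∘ σ)‖ := by
        simp [Matrix.sum_mulVec, Matrix.smul_mulVec, permMatrix_mulVec]
    _ ≤ ∑ σ, w σ * ‖WithLp.toLp p x‖ := by
        refine (norm_sum_le _ _).trans (Finset.sum_le_sum fun σ _ => ?_)
        rw [norm_smul, Real.norm_of_nonneg (hw0 σ), norm_toLp_comp_perm]
    _ = ‖WithLp.toLp p x‖ := by rw [← Finset.sum_mul, hw1, one_mul]

end PiLp

namespace Matrix

variable {𝕜 : Type*} [RCLike 𝕜] {n : Type*}

namespace PosSemidef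

theorem smul_sub_sub {X Y : Matrix n n 𝕜} (hY : Y.PosSemidef) {α c : ℝ}
    (hXY : (α • Y - X).PosSemidef) (hc : α - 1 ≤ c) : (c • Y - (X - Y)).PosSemidef := by
  have h : c • Y - (X - Y) = (α • Y - X) + (c + 1 - α) • Y := by module
  exact h ▸ hXY.add (hY.smul (by linarith))

theorem smul_add_sub {X Y : Matrix n n 𝕜} (hY : Y.PosSemidef) {β c : ℝ}
    (hXY : (X - β • Y).PosSemidef) (hc : 1 - β ≤ c) : (c • Y + (X - Y)).PosSemidef := by
  have h : c • Y + (X - Y) = (X - β • Y) + (c - 1 + β) • Y := by module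
  exact h ▸ hXY.add (hY.smul (by linarith))

end PosSemidef

variable [Fintype n] [DecidableEq n]

theorem normSq_mem_doublyStochastic_of_mem_unitary {U : Matrix n n 𝕜}
    (hU : U ∈ unitary (Matrix n n 𝕜)) :
    of (fun i j => ‖U i j‖ ^ 2) ∈ doublyStochastic ℝ n := by
  have sum_normSq {i : n} {M : Matrix n n 𝕜} (h : M * star M = 1) :
      ∑ j, ‖M i j‖ ^ 2 = 1 := by
    have := congr_fun₂ h i i
    simp only [mul_apply, star_apply, RCLike.star_def, RCLike.mul_conj, one_apply_eq] at this
    exact_mod_cast this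
  refine mem_doublyStochastic_iff_sum.mpr ⟨fun _ _ => sq_nonneg _, fun i => ?_, fun j => ?_⟩
  · exact sum_normSq (Unitary.mul_star_self_of_mem hU)
  · have := sum_normSq (i := j) (M := star U) (by simpa using Unitary.star_mul_self_of_mem hU)
    simpa only [star_apply, norm_star, of_apply] using this

theorem mul_diagonal_mul_star_apply_self (U : Matrix n n 𝕜) (μ : n → ℝ) (i : n) :
    (U * diagonal (RCLike.ofReal ∘ μ) * star U : Matrix n n 𝕜) i i =
      (((of fun i j => ‖U i j‖ ^ 2) *ᵥ μ) i : ℝ) := by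
  rw [mul_apply]
  simp only [mul_diagonal, star_apply, RCLike.star_def, mulVec, dotProduct, of_apply]
  push_cast
  refine Finset.sum_congr rfl fun j _ => ?_
  rw [← RCLike.mul_conj, Function.comp_apply]
  ring

namespace IsHermitian

theorem abs_eigenvalues_le {A Y : Matrix n n 𝕜} (hA : A.IsHermitian) {c : ℝ}
    (h₁ : (c • Y - A).PosSemidef) (h₂ : (c • Y + A).PosSemidef) (i : n) :
    |hA.eigenvalues i| ≤ c * RCLike.re
      ((star (hA.eigenvectorUnitary : Matrix n n 𝕜) * Y * hA.eigenvectorUnitary) i i) := by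
  set V : Matrix n n 𝕜 := ↑hA.eigenvectorUnitary
  have hAV : star V * A * V = diagonal (RCLike.ofReal ∘ hA.eigenvalues) := by
    simpa using hA.conjStarAlgAut_star_eigenvectorUnitary
  have re_diag_nonneg {B : Matrix n n 𝕜} (hB : B.PosSemidef) :
      0 ≤ RCLike.re ((star V * B * V) i i) :=
    (RCLike.nonneg_iff.mp (hB.conjTranspose_mul_mul_same V).diag_nonneg).1
  have H₁ := re_diag_nonneg h₁
  have H₂ := re_diag_nonneg h₂
  simp only [Matrix.mul_sub, Matrix.sub_mul, Matrix.mul_add, Matrix.add_mul, Matrix.mul_smul,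
    Matrix.smul_mul, hAV] at H₁ H₂
  simp only [sub_apply, add_apply, smul_apply, diagonal_apply_eq, Function.comp_apply,
    map_sub, map_add, RCLike.smul_re, RCLike.ofReal_re] at H₁ H₂
  exact abs_le.mpr ⟨by linarith, by linarith⟩

theorem exists_mem_doublyStochastic_abs_eigenvalues_le {A Y : Matrix n n 𝕜} (hA : A.IsHermitian)
    (hY : Y.IsHermitian) {c : ℝ} (h₁ : (c • Y - A).PosSemidef) (h₂ : (c • Y + A).PosSemidef) :
    ∃ M ∈ doublyStochastic ℝ n, ∀ i, |hA.eigenvalues i| ≤ c * (M *ᵥ hY.eigenvalues) i := by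
  have bound := hA.abs_eigenvalues_le h₁ h₂
  set V : Matrix n n 𝕜 := ↑hA.eigenvectorUnitary
  set U : Matrix n n 𝕜 := star V * hY.eigenvectorUnitary
  have hU : U ∈ unitary (Matrix n n 𝕜) :=
    mul_mem (Unitary.star_mem (SetLike.coe_mem _)) (SetLike.coe_mem _)
  have hYV : star V * Y * V = U * diagonal (RCLike.ofReal ∘ hY.eigenvalues) * star U := by
    conv_lhs => rw [hY.spectral_theorem, Unitary.conjStarAlgAut_apply]
    simp only [U, star_mul, star_star, Matrix.mul_assoc]
  refine ⟨_, normSq_mem_doublyStochastic_of_mem_unitary hU, fun i => ?_⟩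
  simpa only [hYV, mul_diagonal_mul_star_apply_self, RCLike.ofReal_re] using bound i

end IsHermitian

end Matrix

theorem schattenNorm_eq_norm_toLp {n : ℕ} {A : Matrix (Fin n) (Fin n) ℂ} (hA : A.IsHermitian)
    {p : ℝ≥0∞} (hp : p ≠ 0) : schattenNorm hA p = ‖WithLp.toLp p hA.eigenvalues‖ := by
  unfold schattenNorm
  split_ifs with htop
  · subst htop
    simp only [PiLp.norm_eq_ciSup, Real.norm_eq_abs]
  · simp only [PiLp.norm_eq_sum (ENNReal.toReal_pos hp htop), Real.norm_eq_abs]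

theorem schattenNorm_le_mul_of_posSemidef {n : ℕ} {A Y : Matrix (Fin n) (Fin n) ℂ}
    (hA : A.IsHermitian) (hY : Y.IsHermitian) {c : ℝ} (hc : 0 ≤ c)
    (h₁ : (c • Y - A).PosSemidef) (h₂ : (c • Y + A).PosSemidef) {p : ℝ≥0∞} (hp : 1 ≤ p) :
    schattenNorm hA p ≤ c * schattenNorm hY p := by
  have : Fact (1 ≤ p) := ⟨hp⟩
  have hp₀ : p ≠ 0 := (zero_lt_one.trans_le hp).ne'
  obtain ⟨M, hM, hle⟩ := hA.exists_mem_doublyStochastic_abs_eigenvalues_le hY h₁ h₂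
  rw [schattenNorm_eq_norm_toLp hA hp₀, schattenNorm_eq_norm_toLp hY hp₀]
  calc ‖WithLp.toLp p hA.eigenvalues‖
      ≤ ‖WithLp.toLp p (c • M *ᵥ hY.eigenvalues)‖ :=
        PiLp.norm_le_norm_of_forall_norm_le fun i => by
          simpa only [Real.norm_eq_abs, PiLp.toLp_apply, Pi.smul_apply, smul_eq_mul] using
            (hle i).trans (le_abs_self _)
    _ = c * ‖WithLp.toLp p (M *ᵥ hY.eigenvalues)‖ := by
        rw [WithLp.toLp_smul, norm_smul, Real.norm_of_nonneg hc]
    _ ≤ c * ‖WithLp.toLp p hY.eigenvalues‖ := by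
        gcongr
        exact PiLp.norm_toLp_mulVec_le hM _

theorem stmt4 {n : ℕ} {X Y : Matrix (Fin n) (Fin n) ℂ}
    (hX : X.PosSemidef) (hY : Y.PosSemidef) (α β : ℝ) (hα : 0 < α) (hβ : 0 < β)
    (h₁ : (α • Y - X).PosSemidef) (h₂ : (X - β • Y).PosSemidef)
    (p : ℝ≥0∞) (hp : 1 ≤ p) :
    schattenNorm (hX.isHermitian.sub hY.isHermitian) p ≤
      min (max |α - 1| |β - 1| * schattenNorm hY.isHermitian p)
        (max |1 / α - 1| |1 / β - 1| * schattenNorm hX.isHermitian p) := by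
  have hYX : (Y - (1 / α) • X).PosSemidef := by
    simpa [smul_sub, smul_smul, hα.ne'] using h₁.smul (one_div_pos.2 hα).le
  have hXY : ((1 / β) • X - Y).PosSemidef := by
    simpa [smul_sub, smul_smul, hβ.ne'] using h₂.smul (one_div_pos.2 hβ).le
  refine le_min (schattenNorm_le_mul_of_posSemidef _ hY.isHermitian (by positivity) ?_ ?_ hp)
    (schattenNorm_le_mul_of_posSemidef _ hX.isHermitian (by positivity) ?_ ?_ hp)
  · exact hY.smul_sub_sub h₁ (le_max_of_le_left (le_abs_self _))
  · exact hY.smul_add_sub h₂ (le_max_of_le_right ((le_abs_self _).trans_eq (abs_sub_comm _ _)))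
  · rw [← neg_sub Y X, sub_neg_eq_add]
    exact hX.smul_add_sub hYX (le_max_of_le_left ((le_abs_self _).trans_eq (abs_sub_comm _ _)))
  · rw [← neg_sub Y X, ← sub_eq_add_neg]
    exact hX.smul_sub_sub hXY (le_max_of_le_right (le_abs_self _))
end

section
/- Let X and Y be n×n positive definite Hermitian matrices with X ≤ e^d Y and Y ≤ e^d X in the Löwner order for some d ≥ 0. Then for every 1 ≤ p < ∞, ‖X - Y‖_p ≤ 2^{1/p} · ((e^d - 1)/e^d) · max(‖X‖_p, ‖Y‖_p), where ‖·‖_p is the Schatten p-norm. -/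
/-!
Diagonalize `X - Y` by an orthonormal basis `(bᵢ)` and put `xᵢ = ⟨bᵢ, X bᵢ⟩`, `yᵢ = ⟨bᵢ, Y bᵢ⟩`.
The eigenvalues of `X - Y` are `xᵢ - yᵢ`, and the Löwner bounds give `xᵢ ≤ eᵈ yᵢ`, `yᵢ ≤ eᵈ xᵢ`,
hence `|xᵢ - yᵢ| ≤ (1 - e⁻ᵈ) max xᵢ yᵢ`. Since the matrix `(|⟨bᵢ, eⱼ⟩|²)` relating `(bᵢ)` to an
eigenbasis `(eⱼ)` of `X` is doubly stochastic, Jensen's inequality gives `∑ xᵢ ^ p ≤ ‖X‖ₚ ^ p`, and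
likewise for `Y`; summing and taking `p`-th roots yields the bound.
-/

open Matrix
open scoped ComplexOrder

/-- The `i`-th largest eigenvalue of a Hermitian matrix (eigenvalues in decreasing order). -/
noncomputable def eigDesc {n : ℕ} {A : Matrix (Fin n) (Fin n) ℂ} (hA : A.IsHermitian)
    (i : Fin n) : ℝ :=
  (hA.eigenvalues ∘ Tuple.sort hA.eigenvalues) i.rev

/-- Schatten p-norm (finite p) of a Hermitian matrix via eigenvalues. -/
noncomputable def schattenNormP {n : ℕ} {A : Matrix (Fin n) (Fin n) ℂ} (hA : A.IsHermitian)
    (p : ℝ) : ℝ :=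
  (∑ i, |hA.eigenvalues i| ^ p) ^ (1 / p)

open scoped InnerProductSpace

theorem Matrix.sum_abs_mulVec_rpow_le_of_mem_doublyStochastic {n : Type*} [Fintype n]
    [DecidableEq n] {M : Matrix n n ℝ} (hM : M ∈ doublyStochastic ℝ n) (v : n → ℝ) {p : ℝ}
    (hp : 1 ≤ p) : ∑ i, |(M *ᵥ v) i| ^ p ≤ ∑ j, |v j| ^ p := by
  obtain ⟨hM0, hrow, hcol⟩ := mem_doublyStochastic_iff_sum.mp hM
  calc ∑ i, |(M *ᵥ v) i| ^ p
      ≤ ∑ i, (∑ j, M i j * |v j|) ^ p := by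
        gcongr with i
        refine (Finset.abs_sum_le_sum_abs _ _).trans_eq ?_
        simp only [abs_mul, abs_of_nonneg (hM0 _ _)]
    _ ≤ ∑ i, ∑ j, M i j * |v j| ^ p := by
        gcongr with i
        exact Real.rpow_arith_mean_le_arith_mean_rpow _ _ _ (fun j _ => hM0 i j) (hrow i)
          (fun j _ => abs_nonneg _) hp
    _ = ∑ j, |v j| ^ p := by
        rw [Finset.sum_comm]
        simp only [← Finset.sum_mul, hcol, one_mul]

theorem LinearMap.sum_abs_re_inner_map_self_rpow_le {𝕜 E ι : Type*} [RCLike 𝕜]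
    [NormedAddCommGroup E] [InnerProductSpace 𝕜 E] [Fintype ι] [DecidableEq ι]
    (T : E →ₗ[𝕜] E) (e b : OrthonormalBasis ι 𝕜 E) {μ : ι → ℝ}
    (he : ∀ j, T (e j) = (μ j : 𝕜) • e j) {p : ℝ} (hp : 1 ≤ p) :
    ∑ i, |RCLike.re ⟪b i, T (b i)⟫_𝕜| ^ p ≤ ∑ j, |μ j| ^ p := by
  let M : Matrix ι ι ℝ := fun i j => ‖⟪b i, e j⟫_𝕜‖ ^ 2
  have hM : M ∈ doublyStochastic ℝ ι := by
    refine mem_doublyStochastic_iff_sum.mpr ⟨fun i j => by positivity, fun i => ?_, fun j => ?_⟩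
    · simp only [M, e.sum_sq_norm_inner_left, b.orthonormal.1 i, one_pow]
    · simp only [M, b.sum_sq_norm_inner_right, e.orthonormal.1 j, one_pow]
  have hdiag : ∀ i, RCLike.re ⟪b i, T (b i)⟫_𝕜 = (M *ᵥ μ) i := by
    intro i
    have hTb : T (b i) = ∑ j, (μ j : 𝕜) • ⟪e j, b i⟫_𝕜 • e j := by
      conv_lhs => rw [← e.sum_repr' (b i)]
      simp only [map_sum, map_smul, he, smul_comm (⟪e _, b i⟫_𝕜)]
    simp only [hTb, inner_sum, inner_smul_right, ← inner_conj_symm (e _) (b i), RCLike.conj_mul,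
      map_sum, mulVec, dotProduct, M]
    refine Finset.sum_congr rfl fun j _ => ?_
    rw [mul_comm]
    norm_cast
  simpa only [hdiag] using sum_abs_mulVec_rpow_le_of_mem_doublyStochastic hM μ hp

theorem Matrix.IsHermitian.sum_abs_re_dotProduct_mulVec_rpow_le {𝕜 n : Type*} [RCLike 𝕜]
    [Fintype n] [DecidableEq n] {A : Matrix n n 𝕜} (hA : A.IsHermitian)
    (b : OrthonormalBasis n 𝕜 (EuclideanSpace 𝕜 n)) {p : ℝ} (hp : 1 ≤ p) :
    ∑ i, |RCLike.re (star ⇑(b i) ⬝ᵥ (A *ᵥ ⇑(b i)))| ^ p ≤ ∑ j, |hA.eigenvalues j| ^ p := by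
  have he : ∀ j, toLpLin 2 2 A (hA.eigenvectorBasis j) =
      (hA.eigenvalues j : 𝕜) • hA.eigenvectorBasis j := fun j =>
    WithLp.ofLp_injective 2 <| by
      rw [ofLp_toLpLin, toLin'_apply, hA.mulVec_eigenvectorBasis, WithLp.ofLp_smul,
        RCLike.real_smul_eq_coe_smul (K := 𝕜)]
  simpa only [EuclideanSpace.inner_eq_star_dotProduct, toLpLin_apply, dotProduct_comm]
    using (toLpLin 2 2 A).sum_abs_re_inner_map_self_rpow_le hA.eigenvectorBasis b he hp

theorem abs_sub_le_mul_max_of_le_mul {r x y : ℝ} (hr : 0 < r) (hxy : x ≤ r * y)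
    (hyx : y ≤ r * x) : |x - y| ≤ (r - 1) / r * max x y := by
  rw [div_mul_eq_mul_div, le_div_iff₀ hr]
  rcases le_total y x with h | h
  · rw [abs_of_nonneg (sub_nonneg.mpr h), max_eq_left h]
    nlinarith
  · rw [abs_of_nonpos (sub_nonpos.mpr h), max_eq_right h]
    nlinarith

theorem abs_sub_rpow_le_of_le_mul {r x y p : ℝ} (hr : 1 ≤ r) (hx : 0 ≤ x) (hy : 0 ≤ y)
    (hxy : x ≤ r * y) (hyx : y ≤ r * x) (hp : 0 ≤ p) :
    |x - y| ^ p ≤ ((r - 1) / r) ^ p * (x ^ p + y ^ p) := by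
  have hc : 0 ≤ (r - 1) / r := div_nonneg (by linarith) (by linarith)
  calc |x - y| ^ p ≤ ((r - 1) / r * max x y) ^ p := by
        gcongr
        exact abs_sub_le_mul_max_of_le_mul (by linarith) hxy hyx
    _ = ((r - 1) / r) ^ p * max (x ^ p) (y ^ p) := by
        rw [Real.mul_rpow hc (le_max_of_le_left hx), Real.rpow_max hx hy hp]
    _ ≤ ((r - 1) / r) ^ p * (x ^ p + y ^ p) := by
        gcongr
        exact max_le_add_of_nonneg (by positivity) (by positivity)

theorem Matrix.PosSemidef.re_dotProduct_mulVec_le {𝕜 n : Type*} [RCLike 𝕜] [Fintype n]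
    {X Y : Matrix n n 𝕜} {r : ℝ} (h : (r • Y - X).PosSemidef) (v : n → 𝕜) :
    RCLike.re (star v ⬝ᵥ (X *ᵥ v)) ≤ r * RCLike.re (star v ⬝ᵥ (Y *ᵥ v)) := by
  have := h.re_dotProduct_nonneg v
  rw [sub_mulVec, dotProduct_sub, map_sub, smul_mulVec, dotProduct_smul, RCLike.smul_re] at this
  linarith

theorem Matrix.PosSemidef.sum_abs_eigenvalues_sub_rpow_le {𝕜 n : Type*} [RCLike 𝕜] [Fintype n]
    [DecidableEq n] {X Y : Matrix n n 𝕜} (hX : X.PosSemidef) (hY : Y.PosSemidef) {r : ℝ}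
    (hr : 1 ≤ r) (h₁ : (r • Y - X).PosSemidef) (h₂ : (r • X - Y).PosSemidef) {p : ℝ}
    (hp : 1 ≤ p) :
    ∑ i, |(hX.isHermitian.sub hY.isHermitian).eigenvalues i| ^ p ≤
      ((r - 1) / r) ^ p * (∑ j, |hX.isHermitian.eigenvalues j| ^ p +
        ∑ j, |hY.isHermitian.eigenvalues j| ^ p) := by
  set hXY := hX.isHermitian.sub hY.isHermitian
  set b := hXY.eigenvectorBasis
  let q (M : Matrix n n 𝕜) (i : n) : ℝ := RCLike.re (star ⇑(b i) ⬝ᵥ (M *ᵥ ⇑(b i)))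
  have hq (i : n) : |hXY.eigenvalues i| ^ p ≤ ((r - 1) / r) ^ p * (|q X i| ^ p + |q Y i| ^ p) := by
    have hx : 0 ≤ q X i := hX.re_dotProduct_nonneg _
    have hy : 0 ≤ q Y i := hY.re_dotProduct_nonneg _
    have heig : hXY.eigenvalues i = q X i - q Y i := by
      rw [hXY.eigenvalues_eq, sub_mulVec, dotProduct_sub, map_sub]
    rw [heig, abs_of_nonneg hx, abs_of_nonneg hy]
    exact abs_sub_rpow_le_of_le_mul hr hx hy (h₁.re_dotProduct_mulVec_le _)
      (h₂.re_dotProduct_mulVec_le _) (by linarith)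
  calc ∑ i, |hXY.eigenvalues i| ^ p
      ≤ ∑ i, ((r - 1) / r) ^ p * (|q X i| ^ p + |q Y i| ^ p) := Finset.sum_le_sum fun i _ => hq i
    _ = ((r - 1) / r) ^ p * (∑ i, |q X i| ^ p + ∑ i, |q Y i| ^ p) := by
      rw [← Finset.sum_add_distrib, Finset.mul_sum]
    _ ≤ _ :=
      mul_le_mul_of_nonneg_left (add_le_add
        (hX.isHermitian.sum_abs_re_dotProduct_mulVec_rpow_le b hp)
        (hY.isHermitian.sum_abs_re_dotProduct_mulVec_rpow_le b hp))
        (Real.rpow_nonneg (div_nonneg (by linarith) (by linarith)) p)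

theorem Real.add_rpow_le_two_rpow_mul_max_rpow {a b p : ℝ} (ha : 0 ≤ a) (hb : 0 ≤ b)
    (hp : 0 ≤ p) : (a + b) ^ p ≤ 2 ^ p * max (a ^ p) (b ^ p) := calc
  (a + b) ^ p ≤ (2 * max a b) ^ p := by
    rw [two_mul]
    gcongr
    exacts [le_max_left a b, le_max_right a b]
  _ = 2 ^ p * max (a ^ p) (b ^ p) := by
    rw [Real.mul_rpow zero_le_two (le_max_of_le_left ha), Real.rpow_max ha hb hp]

theorem stmt6 {n : ℕ} {X Y : Matrix (Fin n) (Fin n) ℂ}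
    (hX : X.PosDef) (hY : Y.PosDef) (d : ℝ) (hd : 0 ≤ d)
    (h₁ : (Real.exp d • Y - X).PosSemidef) (h₂ : (Real.exp d • X - Y).PosSemidef)
    (p : ℝ) (hp : 1 ≤ p) :
    schattenNormP (hX.isHermitian.sub hY.isHermitian) p ≤
      2 ^ (1 / p) * ((Real.exp d - 1) / Real.exp d) *
        max (schattenNormP hX.isHermitian p) (schattenNormP hY.isHermitian p) := by
  set c := (Real.exp d - 1) / Real.exp d
  have hc : 0 ≤ c := div_nonneg (by linarith [Real.one_le_exp hd]) (Real.exp_pos d).le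
  set SX := ∑ j, |hX.isHermitian.eigenvalues j| ^ p
  set SY := ∑ j, |hY.isHermitian.eigenvalues j| ^ p
  have hSX : 0 ≤ SX := by positivity
  have hSY : 0 ≤ SY := by positivity
  calc (∑ i, |(hX.isHermitian.sub hY.isHermitian).eigenvalues i| ^ p) ^ (1 / p)
      ≤ (c ^ p * SX + c ^ p * SY) ^ (1 / p) := by
        rw [← mul_add]
        gcongr
        exact hX.posSemidef.sum_abs_eigenvalues_sub_rpow_le hY.posSemidef (Real.one_le_exp hd)
          h₁ h₂ hp
    _ ≤ 2 ^ (1 / p) * max ((c ^ p * SX) ^ (1 / p)) ((c ^ p * SY) ^ (1 / p)) :=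
      Real.add_rpow_le_two_rpow_mul_max_rpow (by positivity) (by positivity) (by positivity)
    _ = 2 ^ (1 / p) * c * max (SX ^ (1 / p)) (SY ^ (1 / p)) := by
      rw [Real.mul_rpow (by positivity) hSX, Real.mul_rpow (by positivity) hSY, one_div,
        Real.rpow_rpow_inv hc (by linarith), ← mul_max_of_nonneg _ _ hc, mul_assoc]
end

section
/- Let X and Y be n×n positive definite Hermitian matrices with X ≤ e^d Y and Y ≤ e^d X in the Löwner order for some d ≥ 0. Then the spectral norm (operator norm) satisfies ‖X - Y‖ ≤ ((e^d - 1)/e^d) · max(‖X‖, ‖Y‖). -/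
open Matrix
open scoped ComplexOrder

/-- Spectral norm of a Hermitian matrix: maximal absolute value of its eigenvalues. -/
noncomputable def specNorm {n : ℕ} {A : Matrix (Fin n) (Fin n) ℂ} (hA : A.IsHermitian) : ℝ :=
  ⨆ i, |hA.eigenvalues i|

/-! If `v` is a unit eigenvector of `X - Y` with eigenvalue `λ`, then `λ = a - b` with
`a = ⟪v, X v⟫` and `b = ⟪v, Y v⟫`. The Rayleigh quotient bounds `a ≤ ‖X‖`, `b ≤ ‖Y‖`, and the
Löwner hypotheses give `a ≤ e^d b`, `b ≤ e^d a`. Hence `a - b ≤ a - e^{-d} a ≤ (1 - e^{-d}) ‖X‖`,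
and symmetrically for `b - a`. -/

lemma abs_sub_le_div_mul_of_le_mul {a b c M : ℝ} (hc : 1 ≤ c) (ha : a ≤ M) (hb : b ≤ M)
    (hab : a ≤ c * b) (hba : b ≤ c * a) : |a - b| ≤ (c - 1) / c * M := by
  have hc₀ : 0 < c := by linarith
  have key : ∀ {x y : ℝ}, x ≤ M → x ≤ c * y → x - y ≤ (c - 1) / c * M :=
    fun hx hxy => by
      rw [div_mul_eq_mul_div, le_div_iff₀ hc₀]
      nlinarith
  exact abs_sub_le_iff.mpr ⟨key ha hab, key hb hba⟩

namespace Matrix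

variable {n 𝕜 : Type*} [Fintype n] [RCLike 𝕜] {A B : Matrix n n 𝕜}

lemma re_star_dotProduct_self_eq_norm_sq (v : EuclideanSpace 𝕜 n) :
    RCLike.re (star ⇑v ⬝ᵥ ⇑v) = ‖v‖ ^ 2 := by
  rw [dotProduct_comm, ← EuclideanSpace.inner_eq_star_dotProduct, inner_self_eq_norm_sq]

lemma PosSemidef.re_dotProduct_mulVec_le_s7 {c : ℝ} (h : (c • B - A).PosSemidef) (v : n → 𝕜) :
    RCLike.re (star v ⬝ᵥ (A *ᵥ v)) ≤ c * RCLike.re (star v ⬝ᵥ (B *ᵥ v)) := by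
  have := h.re_dotProduct_nonneg v
  simp only [sub_mulVec, smul_mulVec, dotProduct_sub, dotProduct_smul, map_sub,
    RCLike.smul_re] at this
  linarith

variable [DecidableEq n]

lemma IsHermitian.posSemidef_smul_one_sub (hA : A.IsHermitian) {c : ℝ}
    (hc : ∀ i, hA.eigenvalues i ≤ c) : (c • (1 : Matrix n n 𝕜) - A).PosSemidef := by
  have hdiag : c • (1 : Matrix n n 𝕜) - A = (hA.eigenvectorUnitary : Matrix n n 𝕜) *
      diagonal (fun i => ((c - hA.eigenvalues i : ℝ) : 𝕜)) *
        star (hA.eigenvectorUnitary : Matrix n n 𝕜) := by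
    have hU : (hA.eigenvectorUnitary : Matrix n n 𝕜) *
        star (hA.eigenvectorUnitary : Matrix n n 𝕜) = 1 :=
      Unitary.mul_star_self_of_mem hA.eigenvectorUnitary.2
    have hshift : diagonal (fun i => ((c - hA.eigenvalues i : ℝ) : 𝕜)) =
        c • 1 - diagonal (RCLike.ofReal ∘ hA.eigenvalues) := by
      ext i j
      by_cases hij : i = j <;> simp [hij, diagonal, RCLike.real_smul_eq_coe_mul]
    conv_lhs => rw [hA.spectral_theorem, Unitary.conjStarAlgAut_apply]
    rw [hshift, mul_sub, sub_mul, mul_smul_comm, smul_mul_assoc, mul_one, hU]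
  rw [hdiag, (Unitary.isUnit_coe).posSemidef_star_right_conjugate_iff, posSemidef_diagonal_iff]
  exact fun i => by simpa using hc i

lemma IsHermitian.re_dotProduct_mulVec_le_s7 (hA : A.IsHermitian) {c : ℝ}
    (hc : ∀ i, hA.eigenvalues i ≤ c) (v : n → 𝕜) :
    RCLike.re (star v ⬝ᵥ (A *ᵥ v)) ≤ c * RCLike.re (star v ⬝ᵥ v) := by
  simpa using (hA.posSemidef_smul_one_sub hc).re_dotProduct_mulVec_le_s7 (B := 1) v

lemma IsHermitian.eigenvalues_sub_eq (hAB : (A - B).IsHermitian) (i : n) :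
    hAB.eigenvalues i =
      RCLike.re (star ⇑(hAB.eigenvectorBasis i) ⬝ᵥ (A *ᵥ ⇑(hAB.eigenvectorBasis i))) -
        RCLike.re (star ⇑(hAB.eigenvectorBasis i) ⬝ᵥ (B *ᵥ ⇑(hAB.eigenvectorBasis i))) := by
  rw [hAB.eigenvalues_eq, sub_mulVec, dotProduct_sub, map_sub]

end Matrix

lemma abs_eigenvalues_le_specNorm {n : ℕ} {A : Matrix (Fin n) (Fin n) ℂ} (hA : A.IsHermitian)
    (i : Fin n) : |hA.eigenvalues i| ≤ specNorm hA :=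
  le_ciSup (f := fun i => |hA.eigenvalues i|) (Set.finite_range _).bddAbove i

lemma specNorm_nonneg {n : ℕ} {A : Matrix (Fin n) (Fin n) ℂ} (hA : A.IsHermitian) :
    0 ≤ specNorm hA :=
  Real.iSup_nonneg fun _ => abs_nonneg _

lemma re_dotProduct_mulVec_le_specNorm {n : ℕ} {A : Matrix (Fin n) (Fin n) ℂ}
    (hA : A.IsHermitian) (v : EuclideanSpace ℂ (Fin n)) (hv : ‖v‖ = 1) :
    RCLike.re (star ⇑v ⬝ᵥ (A *ᵥ ⇑v)) ≤ specNorm hA := by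
  simpa [re_star_dotProduct_self_eq_norm_sq, hv] using hA.re_dotProduct_mulVec_le_s7
    (fun i => (le_abs_self _).trans (abs_eigenvalues_le_specNorm hA i)) v

theorem stmt7 {n : ℕ} {X Y : Matrix (Fin n) (Fin n) ℂ}
    (hX : X.PosDef) (hY : Y.PosDef) (d : ℝ) (hd : 0 ≤ d)
    (h₁ : (Real.exp d • Y - X).PosSemidef) (h₂ : (Real.exp d • X - Y).PosSemidef) :
    specNorm (hX.isHermitian.sub hY.isHermitian) ≤
      (Real.exp d - 1) / Real.exp d *
        max (specNorm hX.isHermitian) (specNorm hY.isHermitian) := by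
  have hexp : 1 ≤ Real.exp d := Real.one_le_exp hd
  refine Real.iSup_le (fun i => ?_) (mul_nonneg (div_nonneg (by linarith) (by linarith))
    ((specNorm_nonneg _).trans (le_max_left _ _)))
  set v := (hX.isHermitian.sub hY.isHermitian).eigenvectorBasis i
  have hv : ‖v‖ = 1 := (hX.isHermitian.sub hY.isHermitian).eigenvectorBasis.orthonormal.1 i
  rw [IsHermitian.eigenvalues_sub_eq]
  exact abs_sub_le_div_mul_of_le_mul hexp
    ((re_dotProduct_mulVec_le_specNorm hX.isHermitian v hv).trans (le_max_left _ _))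
    ((re_dotProduct_mulVec_le_specNorm hY.isHermitian v hv).trans (le_max_right _ _))
    (h₁.re_dotProduct_mulVec_le_s7 _) (h₂.re_dotProduct_mulVec_le_s7 _)
end

section
/- Let X and Y be n×n real symmetric positive definite matrices and α = e^d ≥ 1 such that αX - Y and αY - X are both positive semidefinite. Then tr((αX - Y)(αY - X)) ≥ 0, and consequently (1 + α²)·‖X - Y‖_F² ≤ (α - 1)²·(‖X‖_F² + ‖Y‖_F²). -/
/-!
Put `P = α • X - Y` and `Q = α • Y - X`. Writing `Q = Cᴴ * C` gives
`tr (P * Q) = tr (C * P * Cᴴ) ≥ 0`, and for symmetric `X`, `Y` expanding the traces gives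
`2 tr (P * Q) = (α - 1)² (‖X‖² + ‖Y‖²) - (1 + α²) ‖X - Y‖²`.
-/

open Matrix

/-- Squared Frobenius norm of a real matrix. -/
noncomputable def frobSq {n : ℕ} (A : Matrix (Fin n) (Fin n) ℝ) : ℝ :=
  Matrix.trace (Aᵀ * A)

open scoped MatrixOrder ComplexOrder in
theorem Matrix.PosSemidef.trace_mul_nonneg {ι 𝕜 : Type*} [Fintype ι] [RCLike 𝕜]
    {A B : Matrix ι ι 𝕜} (hA : A.PosSemidef) (hB : B.PosSemidef) : 0 ≤ (A * B).trace := by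
  classical
  obtain ⟨C, rfl⟩ := CStarAlgebra.nonneg_iff_eq_star_mul_self.mp hB.nonneg
  rw [← mul_assoc, trace_mul_comm, ← mul_assoc]
  exact (hA.mul_mul_conjTranspose_same C).trace_nonneg

lemma frobSq_eq_trace_mul_self {n : ℕ} {X : Matrix (Fin n) (Fin n) ℝ} (hX : X.IsSymm) :
    frobSq X = (X * X).trace := by
  rw [frobSq, hX.eq]

lemma two_mul_trace_smul_sub_mul_smul_sub {n : ℕ} {X Y : Matrix (Fin n) (Fin n) ℝ}
    (hX : X.IsSymm) (hY : Y.IsSymm) (α : ℝ) :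
    2 * ((α • X - Y) * (α • Y - X)).trace =
      (α - 1) ^ 2 * (frobSq X + frobSq Y) - (1 + α ^ 2) * frobSq (X - Y) := by
  have hYX : (Y * X).trace = (X * Y).trace := trace_mul_comm Y X
  rw [frobSq_eq_trace_mul_self hX, frobSq_eq_trace_mul_self hY,
    frobSq_eq_trace_mul_self (hX.sub hY)]
  simp only [sub_mul, mul_sub, Matrix.smul_mul, Matrix.mul_smul, trace_sub, trace_smul, hYX,
    smul_eq_mul]
  ring

theorem stmt11_general {n : ℕ} (X Y : Matrix (Fin n) (Fin n) ℝ)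
    (hX : X.PosDef) (hY : Y.PosDef) (d : ℝ)
    (h₁ : (Real.exp d • X - Y).PosSemidef) (h₂ : (Real.exp d • Y - X).PosSemidef) :
    0 ≤ Matrix.trace ((Real.exp d • X - Y) * (Real.exp d • Y - X)) ∧
      (1 + Real.exp d ^ 2) * frobSq (X - Y) ≤
        (Real.exp d - 1) ^ 2 * (frobSq X + frobSq Y) := by
  have htrace := h₁.trace_mul_nonneg h₂
  have hexpand := two_mul_trace_smul_sub_mul_smul_sub (isHermitian_iff_isSymm.mp hX.isHermitian)
    (isHermitian_iff_isSymm.mp hY.isHermitian) (Real.exp d)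
  exact ⟨htrace, by linarith⟩

theorem stmt11 {n : ℕ} (X Y : Matrix (Fin n) (Fin n) ℝ)
    (hX : X.PosDef) (hY : Y.PosDef) (d : ℝ) (hd : 0 ≤ d)
    (h₁ : (Real.exp d • X - Y).PosSemidef) (h₂ : (Real.exp d • Y - X).PosSemidef) :
    0 ≤ Matrix.trace ((Real.exp d • X - Y) * (Real.exp d • Y - X)) ∧
      (1 + Real.exp d ^ 2) * frobSq (X - Y) ≤
        (Real.exp d - 1) ^ 2 * (frobSq X + frobSq Y) :=
  stmt11_general X Y hX hY d h₁ h₂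
end

section
/- Let X and Y be n×n positive definite Hermitian matrices with X ≤ e^d Y and Y ≤ e^d X in the Löwner order for some d ≥ 0. Then ‖X - Y‖_F ≤ √2 · ((e^d - 1)/√(e^{2d} + 1)) · max(‖X‖_F, ‖Y‖_F), and this bound is at most the general bound √2·((e^d - 1)/e^d)·max(‖X‖_F, ‖Y‖_F). -/
/-!
The trace of a product of two positive semidefinite matrices is nonnegative. Applied to
`e • X - Y` and `e • Y - X` (with `e = exp d`) and expanded, this gives
`e (‖X‖² + ‖Y‖²) ≤ (e² + 1) Re tr (X Y)`, so that
`‖X - Y‖² = ‖X‖² + ‖Y‖² - 2 Re tr (X Y) ≤ (e - 1)² / (e² + 1) · (‖X‖² + ‖Y‖²)`.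
The comparison with the general bound is `e ≤ √(e² + 1)`.
-/

open Matrix
open scoped ComplexOrder

/-- Frobenius norm of a complex matrix. -/
noncomputable def frobNorm {n : ℕ} (A : Matrix (Fin n) (Fin n) ℂ) : ℝ :=
  Real.sqrt (Matrix.trace (Aᴴ * A)).re

namespace Matrix

variable {𝕜 ι : Type*} [RCLike 𝕜] [Fintype ι]

open scoped MatrixOrder in
theorem PosSemidef.trace_mul_nonneg_s13 {A B : Matrix ι ι 𝕜} (hA : A.PosSemidef)
    (hB : B.PosSemidef) : 0 ≤ (A * B).trace := by
  classical
  obtain ⟨S, rfl⟩ := CStarAlgebra.nonneg_iff_eq_star_mul_self.mp hB.nonneg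
  rw [← mul_assoc, trace_mul_comm, ← mul_assoc, star_eq_conjTranspose]
  exact (hA.mul_mul_conjTranspose_same S).trace_nonneg

theorem re_trace_mul_self_add_le {X Y : Matrix ι ι 𝕜} {e : ℝ}
    (h₁ : (e • Y - X).PosSemidef) (h₂ : (e • X - Y).PosSemidef) :
    e * (RCLike.re (X * X).trace + RCLike.re (Y * Y).trace) ≤
      (e ^ 2 + 1) * RCLike.re (X * Y).trace := by
  have hexpand : (e • X - Y) * (e • Y - X) =
      (e ^ 2) • (X * Y) - e • (X * X) - e • (Y * Y) + Y * X := by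
    simp only [sub_mul, mul_sub, smul_mul_assoc, mul_smul_comm, smul_sub, smul_smul, sq]
    abel
  have hnonneg := RCLike.nonneg_iff.mp (h₂.trace_mul_nonneg_s13 h₁) |>.1
  simp only [hexpand, trace_add, trace_sub, trace_smul, map_add, map_sub, RCLike.smul_re,
    trace_mul_comm Y X] at hnonneg
  linarith

end Matrix

theorem frobNorm_nonneg {n : ℕ} (A : Matrix (Fin n) (Fin n) ℂ) : 0 ≤ frobNorm A :=
  Real.sqrt_nonneg _

theorem frobNorm_sq {n : ℕ} (A : Matrix (Fin n) (Fin n) ℂ) :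
    frobNorm A ^ 2 = (Aᴴ * A).trace.re :=
  Real.sq_sqrt (Complex.nonneg_iff.mp (posSemidef_conjTranspose_mul_self A).trace_nonneg).1

theorem frobNorm_sub_sq_le {n : ℕ} {X Y : Matrix (Fin n) (Fin n) ℂ} (hX : X.IsHermitian)
    (hY : Y.IsHermitian) {e : ℝ} (h₁ : (e • Y - X).PosSemidef)
    (h₂ : (e • X - Y).PosSemidef) :
    frobNorm (X - Y) ^ 2 ≤ (e - 1) ^ 2 / (e ^ 2 + 1) * (frobNorm X ^ 2 + frobNorm Y ^ 2) := by
  have key := re_trace_mul_self_add_le h₁ h₂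
  simp only [frobNorm_sq, conjTranspose_sub, hX.eq, hY.eq, sub_mul, mul_sub, trace_sub,
    Complex.sub_re, trace_mul_comm Y X]
  rw [div_mul_eq_mul_div, le_div_iff₀ (by positivity)]
  simp only [RCLike.re_to_complex] at key
  linear_combination 2 * key

theorem sub_one_div_sqrt_sq_add_one_le {x : ℝ} (hx : 1 ≤ x) :
    (x - 1) / √(x ^ 2 + 1) ≤ (x - 1) / x :=
  div_le_div_of_nonneg_left (by linarith) (by linarith) (Real.le_sqrt_of_sq_le (by linarith))

theorem frobNorm_sub_le_max {n : ℕ} {X Y : Matrix (Fin n) (Fin n) ℂ} (hX : X.IsHermitian)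
    (hY : Y.IsHermitian) {e : ℝ} (he : 1 ≤ e) (h₁ : (e • Y - X).PosSemidef)
    (h₂ : (e • X - Y).PosSemidef) :
    frobNorm (X - Y) ≤ √2 * ((e - 1) / √(e ^ 2 + 1)) * max (frobNorm X) (frobNorm Y) := by
  set M := max (frobNorm X) (frobNorm Y)
  have hsq_le (A : Matrix (Fin n) (Fin n) ℂ) (hA : frobNorm A ≤ M) : frobNorm A ^ 2 ≤ M ^ 2 :=
    pow_le_pow_left₀ (frobNorm_nonneg A) hA 2
  have hrhs_sq : (√2 * ((e - 1) / √(e ^ 2 + 1)) * M) ^ 2 =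
      (e - 1) ^ 2 / (e ^ 2 + 1) * (2 * M ^ 2) := by
    rw [mul_pow, mul_pow, div_pow, Real.sq_sqrt zero_le_two, Real.sq_sqrt (by positivity)]
    ring
  have hM : 0 ≤ M := le_max_of_le_left (frobNorm_nonneg X)
  have hrhs : 0 ≤ √2 * ((e - 1) / √(e ^ 2 + 1)) * M := by
    have : 0 ≤ e - 1 := sub_nonneg.mpr he
    positivity
  refine le_of_sq_le_sq ?_ hrhs
  calc frobNorm (X - Y) ^ 2
      ≤ (e - 1) ^ 2 / (e ^ 2 + 1) * (frobNorm X ^ 2 + frobNorm Y ^ 2) :=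
        frobNorm_sub_sq_le hX hY h₁ h₂
    _ ≤ (e - 1) ^ 2 / (e ^ 2 + 1) * (2 * M ^ 2) := by
      gcongr
      linarith [hsq_le X (le_max_left _ _), hsq_le Y (le_max_right _ _)]
    _ = _ := hrhs_sq.symm

theorem stmt13 {n : ℕ} {X Y : Matrix (Fin n) (Fin n) ℂ}
    (hX : X.PosDef) (hY : Y.PosDef) (d : ℝ) (hd : 0 ≤ d)
    (h₁ : (Real.exp d • Y - X).PosSemidef) (h₂ : (Real.exp d • X - Y).PosSemidef) :
    frobNorm (X - Y) ≤
        Real.sqrt 2 * ((Real.exp d - 1) / Real.sqrt (Real.exp (2 * d) + 1)) *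
          max (frobNorm X) (frobNorm Y) ∧
      Real.sqrt 2 * ((Real.exp d - 1) / Real.sqrt (Real.exp (2 * d) + 1)) *
          max (frobNorm X) (frobNorm Y) ≤
        Real.sqrt 2 * ((Real.exp d - 1) / Real.exp d) *
          max (frobNorm X) (frobNorm Y) := by
  have he : 1 ≤ Real.exp d := Real.one_le_exp hd
  rw [show Real.exp (2 * d) = Real.exp d ^ 2 by rw [← Real.exp_nat_mul]; norm_num]
  refine ⟨frobNorm_sub_le_max hX.isHermitian hY.isHermitian he h₁ h₂, ?_⟩
  have hM : 0 ≤ max (frobNorm X) (frobNorm Y) := le_max_of_le_left (frobNorm_nonneg X)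
  gcongr √2 * ?_ * _
  exact sub_one_div_sqrt_sq_add_one_le he
end
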